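/- (Stevanović) Let G and H be simple graphs on n vertices. If c_k(G) ≤ c_k(H) for all 0 ≤ k ≤ n, then LEL(G) ≤ LEL(H). If moreover c_k(G) < c_k(H) for some k, then LEL(G) < LEL(H). -/

import Mathlib

/-!
For `a ≥ 0` one has `∫₀^∞ log (1 + a / t²) dt = π √a`, with primitive
`t log (1 + a / t²) + 2 √a arctan (t / √a)`. Summing over the Laplacian eigenvalues `μᵢ`,
`π · LEL(G) = ∫₀^∞ log ∏ᵢ (1 + μᵢ / t²) dt = ∫₀^∞ log (∑ₖ c_k(G) t^(-2k)) dt`,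
and the integrand increases pointwise with the coefficients `c_k`, strictly if one of them
increases strictly.
-/

open SimpleGraph Matrix

/-- The `k`-th Laplacian coefficient `c_k(G)`, defined by
`det(λI - L(G)) = ∑_{k=0}^n (-1)^k c_k(G) λ^{n-k}`. -/
noncomputable def lapCoeff {V : Type*} [Fintype V] [DecidableEq V]
    (G : SimpleGraph V) [DecidableRel G.Adj] (k : ℕ) : ℤ :=
  (-1) ^ k * ((G.lapMatrix ℤ).charpoly.coeff (Fintype.card V - k))

/-- The Laplacian-like energy `LEL(G) = ∑_k √(μ_k)`, the sum of the square roots of the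
Laplacian eigenvalues of `G` (the eigenvalue `μ_n = 0` contributes `0`). -/
noncomputable def LEL {V : Type*} [Fintype V] [DecidableEq V]
    (G : SimpleGraph V) [DecidableRel G.Adj] : ℝ :=
  ∑ i, Real.sqrt ((SimpleGraph.posSemidef_lapMatrix ℝ G).1.eigenvalues i)

open MeasureTheory Set Filter Real Topology

/-- `log (1 + a / t²)` for `t > 0`, written without the division so that `t * sqrtKernel a t`
splits into `t log (t² + a) - 2 t log t`, which is continuous at `0`. -/
noncomputable def sqrtKernel (a t : ℝ) : ℝ := log (t ^ 2 + a) - 2 * log t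

noncomputable def sqrtKernelPrimitive (a t : ℝ) : ℝ :=
  t * sqrtKernel a t + 2 * √a * arctan (t / √a)

section SqrtKernel

variable {a t : ℝ}

@[simp] lemma sqrtKernel_zero_left (t : ℝ) : sqrtKernel 0 t = 0 := by
  simp [sqrtKernel, log_pow]

lemma sqrtKernel_eq_log_one_add (ha : 0 ≤ a) (ht : t ≠ 0) :
    sqrtKernel a t = log (1 + a / t ^ 2) := by
  have ht2 : 0 < t ^ 2 := by positivity
  rw [sqrtKernel, show 2 * log t = log (t ^ 2) by rw [log_pow, Nat.cast_two],
    ← log_div (by positivity) ht2.ne', add_div, div_self ht2.ne']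

lemma sqrtKernel_nonneg (ha : 0 ≤ a) (ht : t ≠ 0) : 0 ≤ sqrtKernel a t := by
  rw [sqrtKernel_eq_log_one_add ha ht]
  exact log_nonneg (le_add_of_nonneg_right (by positivity))

lemma sqrtKernel_le_div_sq (ha : 0 ≤ a) (ht : t ≠ 0) : sqrtKernel a t ≤ a / t ^ 2 := by
  rw [sqrtKernel_eq_log_one_add ha ht]
  linarith [log_le_sub_one_of_pos (show 0 < 1 + a / t ^ 2 by positivity)]

lemma tendsto_mul_sqrtKernel_atTop (ha : 0 ≤ a) :
    Tendsto (fun t => t * sqrtKernel a t) atTop (𝓝 0) := by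
  refine squeeze_zero' ?_ ?_ (tendsto_const_nhds.div_atTop tendsto_id (a := a))
  · filter_upwards [eventually_gt_atTop 0] with t ht
    exact mul_nonneg ht.le (sqrtKernel_nonneg ha ht.ne')
  · filter_upwards [eventually_gt_atTop 0] with t ht
    calc t * sqrtKernel a t ≤ t * (a / t ^ 2) :=
          mul_le_mul_of_nonneg_left (sqrtKernel_le_div_sq ha ht.ne') ht.le
      _ = a / t := by field_simp

lemma tendsto_sqrtKernelPrimitive_atTop (ha : 0 < a) :
    Tendsto (sqrtKernelPrimitive a) atTop (𝓝 (π * √a)) := by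
  have harctan : Tendsto (fun t => arctan (t / √a)) atTop (𝓝 (π / 2)) :=
    (tendsto_arctan_atTop.mono_right nhdsWithin_le_nhds).comp
      (tendsto_id.atTop_div_const (sqrt_pos.2 ha))
  have h := (tendsto_mul_sqrtKernel_atTop ha.le).add (harctan.const_mul (2 * √a))
  rwa [zero_add, show 2 * √a * (π / 2) = π * √a by ring] at h

lemma continuous_sqrtKernelPrimitive (ha : 0 < a) : Continuous (sqrtKernelPrimitive a) := by
  have hlog : Continuous fun t => log (t ^ 2 + a) :=
    (continuous_pow 2 |>.add continuous_const).log fun t => (by positivity : 0 < t ^ 2 + a).ne'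
  have h : sqrtKernelPrimitive a =
      fun t => t * log (t ^ 2 + a) - 2 * (t * log t) + 2 * √a * arctan (t / √a) := by
    funext t
    rw [sqrtKernelPrimitive, sqrtKernel]
    ring
  rw [h]
  exact ((continuous_id.mul hlog).sub (continuous_mul_log.const_mul 2)).add
    (continuous_const.mul (continuous_arctan.comp (continuous_id.div_const _)))

lemma hasDerivAt_sqrtKernelPrimitive (ha : 0 < a) (ht : 0 < t) :
    HasDerivAt (sqrtKernelPrimitive a) (sqrtKernel a t) t := by
  have hsa : 0 < √a := sqrt_pos.2 ha
  have hlog : HasDerivAt (sqrtKernel a) ((t ^ 2 + a)⁻¹ * (2 * t) - 2 * t⁻¹) t := by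
    have hsq : HasDerivAt (fun t => t ^ 2 + a) (2 * t) t := by
      simpa using (hasDerivAt_pow 2 t).add_const a
    exact ((hasDerivAt_log (by positivity)).comp t hsq).sub
      ((hasDerivAt_log ht.ne').const_mul 2)
  have hdiv : HasDerivAt (fun t => t / √a) (1 / √a) t := (hasDerivAt_id t).div_const _
  have harctan := ((hasDerivAt_arctan (t / √a)).comp t hdiv).const_mul (2 * √a)
  refine (((hasDerivAt_id t).mul hlog).add harctan).congr_deriv ?_
  have h1 : 1 + (t / √a) ^ 2 = (t ^ 2 + a) / a := by
    rw [div_pow, sq_sqrt ha.le]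
    field_simp
    ring
  rw [h1, id]
  field_simp
  ring

lemma integrableOn_sqrtKernel (ha : 0 ≤ a) : IntegrableOn (sqrtKernel a) (Ioi 0) := by
  rcases ha.eq_or_lt with rfl | ha
  · rw [show sqrtKernel 0 = 0 from funext sqrtKernel_zero_left]
    exact integrableOn_zero
  exact integrableOn_Ioi_deriv_of_nonneg (continuous_sqrtKernelPrimitive ha).continuousWithinAt
    (fun t ht => hasDerivAt_sqrtKernelPrimitive ha ht)
    (fun t ht => sqrtKernel_nonneg ha.le (ne_of_gt ht)) (tendsto_sqrtKernelPrimitive_atTop ha)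

lemma integral_sqrtKernel (ha : 0 ≤ a) : ∫ t in Ioi 0, sqrtKernel a t = π * √a := by
  rcases ha.eq_or_lt with rfl | ha
  · simp
  rw [integral_Ioi_of_hasDerivAt_of_nonneg (continuous_sqrtKernelPrimitive ha).continuousWithinAt
    (fun t ht => hasDerivAt_sqrtKernelPrimitive ha ht)
    (fun t ht => sqrtKernel_nonneg ha.le (ne_of_gt ht)) (tendsto_sqrtKernelPrimitive_atTop ha)]
  simp [sqrtKernelPrimitive]

end SqrtKernel

theorem setIntegral_lt_setIntegral_of_forall_lt {X : Type*} [MeasurableSpace X] {μ : Measure X}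
    {s : Set X} {f g : X → ℝ} (hs : MeasurableSet s) (hμs : μ s ≠ 0) (hf : IntegrableOn f s μ)
    (hg : IntegrableOn g s μ) (hfg : ∀ x ∈ s, f x < g x) :
    ∫ x in s, f x ∂μ < ∫ x in s, g x ∂μ := by
  have hpos : 0 < ∫ x in s, (g x - f x) ∂μ := by
    rw [setIntegral_pos_iff_support_of_nonneg_ae (f := fun x => g x - f x) ?_ (hg.sub hf)]
    · have hsub : s ⊆ Function.support (fun x => g x - f x) ∩ s :=
        fun x hx => ⟨(sub_pos.2 (hfg x hx)).ne', hx⟩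
      exact (pos_iff_ne_zero.2 hμs).trans_le (measure_mono hsub)
    · filter_upwards [ae_restrict_mem hs] with x hx using (sub_pos.2 (hfg x hx)).le
  rw [integral_sub hg hf] at hpos
  linarith

section SumSqrt

variable {ι : Type*} [Fintype ι] {μ ν : ι → ℝ}

lemma sum_sqrtKernel_eq_log_prod (hμ : ∀ i, 0 ≤ μ i) {t : ℝ} (ht : 0 < t) :
    ∑ i, sqrtKernel (μ i) t = log (∏ i, (t ^ 2 + μ i)) - Fintype.card ι * (2 * log t) := by
  rw [log_prod fun i _ => (by have := hμ i; positivity : t ^ 2 + μ i ≠ 0)]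
  simp only [sqrtKernel, Finset.sum_sub_distrib, Finset.sum_const, Finset.card_univ,
    nsmul_eq_mul]

lemma integrableOn_sum_sqrtKernel (hμ : ∀ i, 0 ≤ μ i) :
    IntegrableOn (fun t => ∑ i, sqrtKernel (μ i) t) (Ioi 0) :=
  integrable_finsetSum _ fun i _ => integrableOn_sqrtKernel (hμ i)

lemma integral_sum_sqrtKernel (hμ : ∀ i, 0 ≤ μ i) :
    ∫ t in Ioi 0, ∑ i, sqrtKernel (μ i) t = π * ∑ i, √(μ i) := by
  rw [integral_finsetSum _ fun i _ => integrableOn_sqrtKernel (hμ i), Finset.mul_sum]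
  exact Finset.sum_congr rfl fun i _ => integral_sqrtKernel (hμ i)

theorem sum_sqrt_le_of_prod_add_le (hμ : ∀ i, 0 ≤ μ i) (hν : ∀ i, 0 ≤ ν i)
    (h : ∀ x > 0, ∏ i, (x + μ i) ≤ ∏ i, (x + ν i)) : ∑ i, √(μ i) ≤ ∑ i, √(ν i) := by
  have hle : ∀ t ∈ Ioi (0 : ℝ), ∑ i, sqrtKernel (μ i) t ≤ ∑ i, sqrtKernel (ν i) t := by
    intro t (ht : 0 < t)
    have hprod : 0 < ∏ i, (t ^ 2 + μ i) := Finset.prod_pos fun i _ => by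
      have := hμ i; positivity
    rw [sum_sqrtKernel_eq_log_prod hμ ht, sum_sqrtKernel_eq_log_prod hν ht]
    exact sub_le_sub_right (log_le_log hprod (h _ (pow_pos ht 2))) _
  have := setIntegral_mono_on (integrableOn_sum_sqrtKernel hμ) (integrableOn_sum_sqrtKernel hν)
    measurableSet_Ioi hle
  rw [integral_sum_sqrtKernel hμ, integral_sum_sqrtKernel hν] at this
  exact le_of_mul_le_mul_left this pi_pos

theorem sum_sqrt_lt_of_prod_add_lt (hμ : ∀ i, 0 ≤ μ i) (hν : ∀ i, 0 ≤ ν i)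
    (h : ∀ x > 0, ∏ i, (x + μ i) < ∏ i, (x + ν i)) : ∑ i, √(μ i) < ∑ i, √(ν i) := by
  have hlt : ∀ t ∈ Ioi (0 : ℝ), ∑ i, sqrtKernel (μ i) t < ∑ i, sqrtKernel (ν i) t := by
    intro t (ht : 0 < t)
    have hprod : 0 < ∏ i, (t ^ 2 + μ i) := Finset.prod_pos fun i _ => by
      have := hμ i; positivity
    rw [sum_sqrtKernel_eq_log_prod hμ ht, sum_sqrtKernel_eq_log_prod hν ht]
    exact sub_lt_sub_right (log_lt_log hprod (h _ (pow_pos ht 2))) _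
  have := setIntegral_lt_setIntegral_of_forall_lt measurableSet_Ioi (by simp)
    (integrableOn_sum_sqrtKernel hμ) (integrableOn_sum_sqrtKernel hν) hlt
  rw [integral_sum_sqrtKernel hμ, integral_sum_sqrtKernel hν] at this
  exact lt_of_mul_lt_mul_left this pi_pos.le

end SumSqrt

lemma neg_one_pow_mul_neg_pow_sub {R : Type*} [CommRing R] {n k : ℕ} (hk : k ≤ n) (x : R) :
    (-1) ^ n * (-x) ^ (n - k) = (-1) ^ k * x ^ (n - k) := by
  obtain ⟨m, rfl⟩ := Nat.exists_eq_add_of_le hk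
  have h : (-1 : R) ^ m * (-1) ^ m = 1 := by rw [← mul_pow, neg_one_mul, neg_neg, one_pow]
  rw [Nat.add_sub_cancel_left, neg_pow, pow_add]
  linear_combination (-1) ^ k * x ^ m * h

section Laplacian

open Polynomial Finset

variable {V : Type*} [Fintype V] [DecidableEq V] (G : SimpleGraph V) [DecidableRel G.Adj]

lemma SimpleGraph.lapMatrix_map_intCast :
    (G.lapMatrix ℤ).map (Int.castRingHom ℝ) = G.lapMatrix ℝ := by
  ext i j
  by_cases hij : i = j <;>
    simp [lapMatrix, degMatrix, adjMatrix_apply, hij]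

theorem prod_add_eigenvalues_lapMatrix_eq_sum_lapCoeff (x : ℝ) :
    ∏ i, (x + (posSemidef_lapMatrix ℝ G).1.eigenvalues i) =
      ∑ k ∈ range (Fintype.card V + 1), (lapCoeff G k : ℝ) * x ^ (Fintype.card V - k) := by
  set n := Fintype.card V
  have hchar : ∏ i, (x + (posSemidef_lapMatrix ℝ G).1.eigenvalues i) =
      (-1) ^ n * (G.lapMatrix ℝ).charpoly.eval (-x) := by
    rw [(posSemidef_lapMatrix ℝ G).1.charpoly_eq, eval_prod,
      show (-1 : ℝ) ^ n = ∏ _i : V, (-1) by simp [n], ← prod_mul_distrib]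
    refine prod_congr rfl fun i _ => ?_
    simp only [eval_sub, eval_X, eval_C, RCLike.ofReal_real_eq_id, id]
    ring
  rw [hchar, ← G.lapMatrix_map_intCast, charpoly_map, eval_map,
    eval₂_eq_sum_range' _ (n := n + 1) (by simp [n]), ← sum_range_reflect, mul_sum]
  refine sum_congr rfl fun k hk => ?_
  rw [Nat.add_sub_cancel, eq_intCast, mul_left_comm,
    neg_one_pow_mul_neg_pow_sub (Nat.lt_succ_iff.1 (mem_range.1 hk)), lapCoeff]
  push_cast
  ring

end Laplacian

/-- **Stevanović**: if `c_k(G) ≤ c_k(H)` for all `0 ≤ k ≤ n` then `LEL(G) ≤ LEL(H)`,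
and if moreover some inequality is strict then `LEL(G) < LEL(H)`. -/
theorem LEL_le_of_lapCoeff_le {V : Type*} [Fintype V] [DecidableEq V]
    (G H : SimpleGraph V) [DecidableRel G.Adj] [DecidableRel H.Adj]
    (h : ∀ k ≤ Fintype.card V, lapCoeff G k ≤ lapCoeff H k) :
    LEL G ≤ LEL H ∧
      ((∃ k ≤ Fintype.card V, lapCoeff G k < lapCoeff H k) → LEL G < LEL H) := by
  have hG := (posSemidef_lapMatrix ℝ G).eigenvalues_nonneg
  have hH := (posSemidef_lapMatrix ℝ H).eigenvalues_nonneg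
  have hterm : ∀ x > (0 : ℝ), ∀ k ∈ Finset.range (Fintype.card V + 1),
      (lapCoeff G k : ℝ) * x ^ (Fintype.card V - k) ≤
        (lapCoeff H k : ℝ) * x ^ (Fintype.card V - k) := fun x hx k hk =>
    mul_le_mul_of_nonneg_right (Int.cast_le.2 (h k (Nat.lt_succ_iff.1 (Finset.mem_range.1 hk))))
      (pow_nonneg hx.le _)
  refine ⟨sum_sqrt_le_of_prod_add_le hG hH fun x hx => ?_,
    fun ⟨k, hk, hlt⟩ => sum_sqrt_lt_of_prod_add_lt hG hH fun x hx => ?_⟩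
  · simp only [prod_add_eigenvalues_lapMatrix_eq_sum_lapCoeff]
    exact Finset.sum_le_sum (hterm x hx)
  · simp only [prod_add_eigenvalues_lapMatrix_eq_sum_lapCoeff]
    exact Finset.sum_lt_sum (hterm x hx) ⟨k, Finset.mem_range.2 (Nat.lt_succ_of_le hk),
      mul_lt_mul_of_pos_right (Int.cast_lt.2 hlt) (pow_pos hx _)⟩
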